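/- Let x : ℝ → ℝ be a continuously differentiable T-periodic function with |x'(t)| < c for all t and average (1/T)·∫₀ᵀ x(t) dt = π/2. Then for every δ > 0 with 2δ < cT, the Lebesgue measure of the set C_δ = {t ∈ [0, T] : |x(t) − π/2| ≤ δ} is strictly greater than 2δ/c. -/

import Mathlib

/-!
The derivative is continuous and periodic, so `|x'|` attains its maximum, which is `< c`;
hence `x` is `K`-Lipschitz for some `K < c`. By the mean value theorem for integrals
`x t₀ = π/2` for some `t₀`, so `|x - π/2| ≤ δ` on the ball of radius `δ/K` about `t₀`.
Modulo `T` this ball has measure `min T (2δ/K) > 2δ/c`, and `[0, T]` covers the circle `ℝ/Tℤ`.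
-/

open Real Set MeasureTheory

namespace Function.Periodic

theorem deriv {F : Type*} [NormedAddCommGroup F] [NormedSpace ℝ F] {f : ℝ → F} {T : ℝ}
    (hf : Periodic f T) : Periodic (_root_.deriv f) T := fun t => by
  rw [← deriv_comp_add_const]
  exact congrArg (_root_.deriv · t) (funext hf)

theorem exists_le_lt_of_continuous {α : Type*} [LinearOrder α] [TopologicalSpace α]
    [ClosedIciTopology α] {f : ℝ → α} {T : ℝ} {c : α} (hf : Periodic f T) (hT : T ≠ 0)
    (hfc : Continuous f) (hlt : ∀ t, f t < c) : ∃ M < c, ∀ t, f t ≤ M := by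
  obtain ⟨_, ⟨t, rfl⟩, hmax⟩ :=
    (hf.compact_of_continuous hT hfc).exists_isGreatest (range_nonempty f)
  exact ⟨f t, hlt t, fun s => hmax ⟨s, rfl⟩⟩

theorem exists_lipschitzWith_lt {F : Type*} [NormedAddCommGroup F] [NormedSpace ℝ F]
    {x : ℝ → F} {T c : ℝ} (hx : Periodic x T) (hT : T ≠ 0) (hC1 : ContDiff ℝ 1 x)
    (hx' : ∀ t, ‖_root_.deriv x t‖ < c) :
    ∃ K : NNReal, 0 < K ∧ (K : ℝ) < c ∧ LipschitzWith K x := by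
  obtain ⟨M, hMc, hM⟩ := (hx.deriv.comp (‖·‖)).exists_le_lt_of_continuous hT
    (hC1.continuous_deriv le_rfl).norm hx'
  have hM0 : 0 ≤ M := (norm_nonneg _).trans (hM 0)
  have hK : ((M + c) / 2).toNNReal = ((M + c) / 2 : ℝ) := Real.coe_toNNReal _ (by linarith)
  refine ⟨((M + c) / 2).toNNReal, ?_, ?_, ?_⟩
  · rw [Real.toNNReal_pos]; linarith
  · rw [hK]; linarith
  · refine lipschitzWith_of_nnnorm_deriv_le (hC1.differentiable one_ne_zero) fun t => ?_
    rw [← NNReal.coe_le_coe, coe_nnnorm, hK]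
    exact (hM t).trans (by linarith)

/-- Lebesgue measure on `(0, T]` is the pushforward of the Haar measure of `ℝ/Tℤ`, in which
the ball of radius `r` has measure `min T (2r)`. -/
theorem ofReal_min_le_volume_sep_Icc {p : ℝ → Prop} {T : ℝ} (hp : Periodic p T) (hT : 0 < T)
    {t₀ r : ℝ} (hball : ∀ t, |t - t₀| ≤ r → p t) :
    ENNReal.ofReal (min T (2 * r)) ≤ volume {t ∈ Icc 0 T | p t} := by
  have := Fact.mk hT
  set B := Metric.closedBall (t₀ : AddCircle T) r
  have hsub : QuotientAddGroup.mk ⁻¹' B ∩ Ioc 0 (0 + T) ⊆ {t ∈ Icc 0 T | p t} := by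
    rintro t ⟨hdist, ht0, htT⟩
    refine ⟨⟨ht0.le, by simpa using htT⟩, ?_⟩
    rw [mem_preimage, Metric.mem_closedBall, dist_eq_norm, ← AddCircle.coe_sub,
      AddCircle.norm_eq] at hdist
    rw [← hp.sub_int_mul_eq (round (T⁻¹ * (t - t₀)))]
    exact hball _ (by rwa [sub_right_comm])
  calc ENNReal.ofReal (min T (2 * r)) = volume B := (AddCircle.volume_closedBall T r).symm
    _ = volume (QuotientAddGroup.mk ⁻¹' B ∩ Ioc 0 (0 + T)) :=
        AddCircle.add_projection_respects_measure T 0 Metric.isClosed_closedBall.measurableSet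
    _ ≤ _ := measure_mono hsub

end Function.Periodic

/-- if `x` is `T`-periodic, `C¹`, with `|x'| < c` and average `π/2`, then
for `0 < δ` with `2δ < cT` the measure of `{t ∈ [0,T] : |x t - π/2| ≤ δ}` exceeds `2δ/c`. -/
theorem measure_near_average_lower_bound (c T : ℝ) (hc : 0 < c) (hT : 0 < T) (x : ℝ → ℝ)
    (hper : Function.Periodic x T) (hC1 : ContDiff ℝ 1 x)
    (hx' : ∀ t : ℝ, |deriv x t| < c)
    (havg : (1 / T) * ∫ t in (0:ℝ)..T, x t = Real.pi / 2)
    (δ : ℝ) (hδ : 0 < δ) (hδT : 2 * δ < c * T) :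
    ENNReal.ofReal (2 * δ / c)
      < volume {t ∈ Set.Icc (0:ℝ) T | |x t - Real.pi / 2| ≤ δ} := by
  obtain ⟨K, hK0, hKc, hlip⟩ := hper.exists_lipschitzWith_lt hT.ne' hC1 hx'
  obtain ⟨t₀, -, hmean⟩ := exists_eq_interval_average hT.ne hC1.continuous.continuousOn
  have ht₀ : x t₀ = π / 2 := by rw [hmean, interval_average_eq_div, ← havg]; ring
  have hnear (t : ℝ) (ht : |t - t₀| ≤ δ / K) : |x t - π / 2| ≤ δ := by
    rw [← Real.dist_eq] at ht
    rw [← ht₀, ← Real.dist_eq]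
    calc dist (x t) (x t₀) ≤ K * dist t t₀ := hlip.dist_le_mul t t₀
      _ ≤ K * (δ / K) := by gcongr
      _ = δ := mul_div_cancel₀ δ (NNReal.coe_pos.mpr hK0).ne'
  calc ENNReal.ofReal (2 * δ / c) < ENNReal.ofReal (min T (2 * (δ / K))) := by
        rw [ENNReal.ofReal_lt_ofReal_iff (by positivity), lt_min_iff, div_lt_iff₀ hc,
          mul_div_assoc]
        exact ⟨by linarith, by gcongr⟩
    _ ≤ _ := (hper.comp fun y => |y - π / 2| ≤ δ).ofReal_min_le_volume_sep_Icc hT hnear
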